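/- arXiv:2202.01114 — 3 statements merged into one kernel-verified Lean document; each statement's English description precedes it below -/
import Mathlib

section
/- Let A = {(0,0),(5,0),(3,1),(1,2),(0,5)} ⊂ ℤ². Then for every t ≥ 0, |tA| = (5t² + 3t + 2)/2. -/
/-!
The set `tA` is the set of points of the lattice `{(x, y) : 5 ∣ x + 2y}` in the triangle
`x, y ≥ 0, x + y ≤ 5t`: adding `A` to the triangle of size `t` gives the one of size `t + 1`.
Row `y ≤ 5t` of that triangle is an arithmetic progression of step `5` starting at `3y mod 5`,
with `⌊(5t + 5 - y - (3y mod 5)) / 5⌋` terms. Passing from `t` to `t + 1` lengthens each old row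
by one and adds five rows with `3` points in total, so `|(t + 1)A| = |tA| + 5t + 4`.
-/

open Pointwise Finset

lemma Finset.mem_add_iff_exists_sub_mem {G : Type*} [AddGroup G] [DecidableEq G]
    {s t : Finset G} {g : G} : g ∈ s + t ↔ ∃ a ∈ t, g - a ∈ s := by
  simp only [mem_add]
  constructor
  · rintro ⟨x, hx, a, ha, rfl⟩
    exact ⟨a, ha, by simpa⟩
  · rintro ⟨a, ha, h⟩
    exact ⟨g - a, h, a, ha, sub_add_cancel g a⟩

noncomputable def latticeTriangle (t : ℕ) : Finset (ℤ × ℤ) :=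
  {p ∈ Icc 0 (5 * t : ℤ) ×ˢ Icc 0 (5 * t : ℤ) | p.1 + p.2 ≤ 5 * t ∧ 5 ∣ p.1 + 2 * p.2}

lemma mem_latticeTriangle {t : ℕ} {p : ℤ × ℤ} :
    p ∈ latticeTriangle t ↔ 0 ≤ p.1 ∧ 0 ≤ p.2 ∧ p.1 + p.2 ≤ 5 * t ∧ 5 ∣ p.1 + 2 * p.2 := by
  simp only [latticeTriangle, mem_filter, mem_product, mem_Icc]
  omega

lemma latticeTriangle_succ (t : ℕ) :
    latticeTriangle (t + 1) = latticeTriangle t + {(0,0), (5,0), (3,1), (1,2), (0,5)} := by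
  ext ⟨x, y⟩
  simp only [mem_add_iff_exists_sub_mem, mem_insert, mem_singleton, exists_eq_or_imp,
    exists_eq_left, mem_latticeTriangle, Prod.mk_sub_mk]
  push_cast
  -- Outside the box `[0,5)²` a point can be lowered by `(5,0)` or `(0,5)`; the lattice points
  -- in the box are sums of at most two of `(3,1)`, `(1,2)`, which `omega` cannot see by itself.
  by_cases hbox : 0 ≤ x ∧ x < 5 ∧ 0 ≤ y ∧ y < 5
  · obtain ⟨hx0, hx5, hy0, hy5⟩ := hbox
    interval_cases x <;> interval_cases y <;> omega
  · omega

lemma nsmul_eq_latticeTriangle (t : ℕ) :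
    t • ({(0,0), (5,0), (3,1), (1,2), (0,5)} : Finset (ℤ × ℤ)) = latticeTriangle t := by
  induction t with
  | zero =>
    ext ⟨x, y⟩
    simp only [zero_nsmul, mem_zero, Prod.mk_eq_zero, mem_latticeTriangle]
    omega
  | succ t ih => rw [succ_nsmul, ih, latticeTriangle_succ]

def rowCount (t y : ℕ) : ℕ := (5 * t + 5 - y - 3 * y % 5) / 5

lemma filter_snd_latticeTriangle {t y : ℕ} (hy : y ≤ 5 * t) :
    {p ∈ latticeTriangle t | p.2.toNat = y} =
      (range (rowCount t y)).image fun k => (((3 * y % 5 + 5 * k : ℕ) : ℤ), (y : ℤ)) := by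
  ext ⟨x, y'⟩
  simp only [mem_filter, mem_latticeTriangle, mem_image, mem_range, rowCount, Prod.mk.injEq]
  constructor
  · rintro ⟨⟨hx, hy', hs, hd⟩, rfl⟩
    exact ⟨(x.toNat - 3 * y'.toNat % 5) / 5, by omega, by omega, by omega⟩
  · rintro ⟨k, hk, rfl, rfl⟩
    omega

lemma card_filter_snd_latticeTriangle {t y : ℕ} (hy : y ≤ 5 * t) :
    #{p ∈ latticeTriangle t | p.2.toNat = y} = rowCount t y := by
  rw [filter_snd_latticeTriangle hy, card_image_of_injective _ fun k k' h => by
    simp only [Prod.mk.injEq] at h; omega, card_range]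

lemma card_latticeTriangle (t : ℕ) :
    #(latticeTriangle t) = ∑ y ∈ range (5 * t + 1), rowCount t y := by
  rw [card_eq_sum_card_fiberwise (f := fun p => p.2.toNat) (t := range (5 * t + 1))]
  · exact sum_congr rfl fun y hy => card_filter_snd_latticeTriangle (by simp at hy; omega)
  · intro p hp
    rw [mem_coe, mem_latticeTriangle] at hp
    simp only [coe_range, Set.mem_Iio]
    omega

lemma two_mul_sum_rowCount (t : ℕ) :
    2 * ∑ y ∈ range (5 * t + 1), rowCount t y = 5 * t ^ 2 + 3 * t + 2 := by
  induction t with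
  | zero => simp [rowCount]
  | succ t ih =>
    have hold : ∀ y ∈ range (5 * t + 1), rowCount (t + 1) y = rowCount t y + 1 := by
      intro y hy
      simp only [mem_range] at hy
      simp only [rowCount]
      omega
    have hnew : ∑ i ∈ range 5, rowCount (t + 1) (5 * t + 1 + i) = 3 := by
      simp only [sum_range_succ, sum_range_zero, rowCount]
      omega
    rw [show 5 * (t + 1) + 1 = 5 * t + 1 + 5 by ring, sum_range_add, sum_congr rfl hold,
      sum_add_distrib, hnew, sum_const, card_range, smul_eq_mul]
    linarith

/-- For `A = {(0,0),(5,0),(3,1),(1,2),(0,5)} ⊂ ℤ²`, `|tA| = (5t² + 3t + 2)/2` for every `t ≥ 0`. -/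
theorem stmt_7 (A : Finset (ℤ × ℤ))
    (hA : A = {(0,0), (5,0), (3,1), (1,2), (0,5)}) :
    ∀ t : ℕ, 2 * (t • A).card = 5 * t ^ 2 + 3 * t + 2 := by
  intro t
  rw [hA, nsmul_eq_latticeTriangle, card_latticeTriangle, two_mul_sum_rowCount]
end

section
/- For A = {(0,0),(3,0),(2,0),(2,2),(0,1)} ⊂ ℤ² (so d_A = 4), the cardinality of the t-fold sumset satisfies |tA| = 4t² − 2t + 3 for all t ≥ 1. -/
open Pointwise

/-- Right endpoint of row `y` in `t`-fold sumset. -/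
def mxx (t : ℕ) (y : ℤ) : ℤ := (6 * t - y - 5 * (y % 2)) / 2

/-- Row `y` of the `t`-fold sumset. -/
noncomputable def RR (t : ℕ) (y : ℤ) : Finset ℤ :=
  if y < t then insert 0 (Finset.Icc 2 (mxx t y))
  else insert (2 * (y - t)) ((Finset.Icc (2 * (y - t) + 2) (mxx t y)).erase (2 * (y - t) + 3))

/-- Explicit description of the `t`-fold sumset. -/
noncomputable def SS (t : ℕ) : Finset (ℤ × ℤ) :=
  (Finset.range (2 * t + 1)).biUnion fun y => (RR t (y : ℤ)).image fun x => (x, (y : ℤ))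

lemma mem_RR (t : ℕ) (y x : ℤ) :
    x ∈ RR t y ↔
      ((y < t ∧ (x = 0 ∨ (2 ≤ x ∧ 2 * x + y + 5 * (y % 2) ≤ 6 * t))) ∨
       ((t : ℤ) ≤ y ∧ (x = 2 * (y - t) ∨
          (2 * (y - t) + 2 ≤ x ∧ x ≠ 2 * (y - t) + 3 ∧ 2 * x + y + 5 * (y % 2) ≤ 6 * t)))) := by
  unfold RR mxx
  split_ifs with h <;>
    simp only [Finset.mem_insert, Finset.mem_Icc, Finset.mem_erase] <;> omega

lemma mem_SS (t : ℕ) (x y : ℤ) :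
    (x, y) ∈ SS t ↔
      (0 ≤ y ∧ y ≤ 2 * t ∧
        ((y < t ∧ (x = 0 ∨ (2 ≤ x ∧ 2 * x + y + 5 * (y % 2) ≤ 6 * t))) ∨
         ((t : ℤ) ≤ y ∧ (x = 2 * (y - t) ∨
            (2 * (y - t) + 2 ≤ x ∧ x ≠ 2 * (y - t) + 3 ∧ 2 * x + y + 5 * (y % 2) ≤ 6 * t))))) := by
  unfold SS
  constructor
  · intro hmem
    obtain ⟨y', hy', him⟩ := Finset.mem_biUnion.1 hmem
    obtain ⟨x', hx', heq⟩ := Finset.mem_image.1 him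
    rw [Prod.mk.injEq] at heq
    obtain ⟨rfl, rfl⟩ := heq
    rw [mem_RR] at hx'
    rw [Finset.mem_range] at hy'
    omega
  · rintro ⟨h0, h2, h⟩
    refine Finset.mem_biUnion.2 ⟨y.toNat, Finset.mem_range.2 (by omega),
      Finset.mem_image.2 ⟨x, ?_, ?_⟩⟩
    · rw [mem_RR]; omega
    · rw [Prod.mk.injEq]; exact ⟨rfl, by omega⟩

/-- Row counts. -/
def rcc (t : ℕ) (y : ℤ) : ℤ :=
  if y < t then mxx t y
  else if 2 * (y - t) + 4 ≤ mxx t y then mxx t y - 2 * (y - t) - 1 else 1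

lemma card_RR (t : ℕ) (y : ℤ) (h0 : 0 ≤ y) (h2 : y ≤ 2 * t) (ht : 1 ≤ t) :
    ((RR t y).card : ℤ) = rcc t y := by
  unfold RR rcc mxx
  split_ifs with h h'
  · rw [Finset.card_insert_of_notMem (by simp), Int.card_Icc]
    omega
  · rw [Finset.card_insert_of_notMem
        (by simp only [Finset.mem_erase, Finset.mem_Icc]; omega), Finset.card_erase_eq_ite]
    simp only [Finset.mem_Icc, Int.card_Icc]
    split_ifs with h'' <;> omega
  · rw [Finset.card_insert_of_notMem
        (by simp only [Finset.mem_erase, Finset.mem_Icc]; omega), Finset.card_erase_eq_ite]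
    simp only [Finset.mem_Icc, Int.card_Icc]
    split_ifs with h'' <;> omega

lemma card_SS (t : ℕ) : ((SS t).card : ℤ) = ∑ y ∈ Finset.range (2 * t + 1), ((RR t (y : ℤ)).card : ℤ) := by
  unfold SS
  rw [Finset.card_biUnion]
  · push_cast
    refine Finset.sum_congr rfl fun y _ => ?_
    rw [Finset.card_image_of_injective _ (fun a b hab => by simpa using hab)]
  · intro a _ b _ hab
    simp only [Finset.disjoint_left, Finset.mem_image]
    rintro p ⟨x, _, rfl⟩ ⟨x', _, h⟩
    have hba : ((b : ℤ)) = (a : ℤ) := congrArg Prod.snd h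
    exact hab (by exact_mod_cast hba.symm)

-- evaluation lemmas
lemma rcc_low_even (t : ℕ) (u : ℤ) (h0 : 0 ≤ u) (h : 2 * u < t) :
    rcc t (2 * u) = 3 * t - u := by
  unfold rcc mxx
  rw [if_pos (by omega)]
  omega

lemma rcc_low_odd (t : ℕ) (u : ℤ) (h0 : 0 ≤ u) (h : 2 * u + 1 < t) :
    rcc t (2 * u + 1) = 3 * t - u - 3 := by
  unfold rcc mxx
  rw [if_pos (by omega)]
  omega

lemma rcc_top0 (t : ℕ) (ht : 1 ≤ t) : rcc t (2 * t) = 1 := by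
  unfold rcc mxx
  rw [if_neg (by omega), if_neg (by omega)]

lemma rcc_top1 (t : ℕ) (ht : 1 ≤ t) : rcc t (2 * t - 1) = 1 := by
  unfold rcc mxx
  rw [if_neg (by omega), if_neg (by omega)]

lemma rcc_up_even (t : ℕ) (u : ℤ) (h1 : 1 ≤ u) (h : 2 * u ≤ t) :
    rcc t (2 * t - 2 * u) = 5 * u - 1 := by
  unfold rcc mxx
  rw [if_neg (by omega), if_pos (by omega)]
  omega

lemma rcc_up_odd (t : ℕ) (u : ℤ) (h1 : 1 ≤ u) (h : 2 * u + 1 ≤ t) :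
    rcc t (2 * t - (2 * u + 1)) = 5 * u - 1 := by
  unfold rcc mxx
  rw [if_neg (by omega), if_pos (by omega)]
  omega

lemma lowSum (t : ℕ) : ∀ u : ℕ, 2 * u ≤ t →
    ∑ y ∈ Finset.range (2 * u), rcc t (y : ℤ) = 6 * t * u - u ^ 2 - 2 * u := by
  intro u
  induction u with
  | zero => simp
  | succ u ih =>
    intro h
    have h2 : (2 : ℕ) * (u + 1) = 2 * u + 1 + 1 := by ring
    rw [h2, Finset.sum_range_succ, Finset.sum_range_succ, ih (by omega)]
    have e1 : rcc t ((2 * u : ℕ) : ℤ) = 3 * t - u := by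
      push_cast; rw [rcc_low_even t u (by positivity) (by exact_mod_cast by omega)]
    have e2 : rcc t ((2 * u + 1 : ℕ) : ℤ) = 3 * t - u - 3 := by
      push_cast; rw [show ((2:ℤ) * u + 1) = 2 * (u:ℤ) + 1 by ring,
        rcc_low_odd t u (by positivity) (by exact_mod_cast by omega)]
    rw [e1, e2]
    push_cast
    ring

lemma upSum (t : ℕ) : ∀ u : ℕ, 1 ≤ u → 2 * u ≤ t + 1 →
    ∑ k ∈ Finset.range (2 * u), rcc t (2 * t - (k : ℤ)) = 5 * u ^ 2 - 7 * u + 4 := by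
  intro u
  induction u with
  | zero => omega
  | succ u ih =>
    intro _ h
    rcases Nat.eq_zero_or_pos u with rfl | hu
    · norm_num [Finset.sum_range_succ]
      rw [rcc_top0 t (by omega), rcc_top1 t (by omega)]
      norm_num
    · have h2 : (2 : ℕ) * (u + 1) = 2 * u + 1 + 1 := by ring
      rw [h2, Finset.sum_range_succ, Finset.sum_range_succ, ih hu (by omega)]
      have e1 : rcc t (2 * t - ((2 * u : ℕ) : ℤ)) = 5 * u - 1 := by
        push_cast
        rw [rcc_up_even t u (by exact_mod_cast hu) (by exact_mod_cast by omega)]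
      have e2 : rcc t (2 * t - ((2 * u + 1 : ℕ) : ℤ)) = 5 * u - 1 := by
        push_cast
        rw [show ((2:ℤ) * u + 1) = 2 * (u:ℤ) + 1 by ring,
          rcc_up_odd t u (by exact_mod_cast hu) (by exact_mod_cast by omega)]
      rw [e1, e2]
      push_cast
      ring

lemma sum_rcc (t : ℕ) (ht : 1 ≤ t) :
    ∑ y ∈ Finset.range (2 * t + 1), rcc t (y : ℤ) = 4 * t ^ 2 - 2 * t + 3 := by
  have hsplit : 2 * t + 1 = t + (t + 1) := by ring
  rw [hsplit, Finset.sum_range_add]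
  -- reflect the upper sum
  have hrefl : ∑ k ∈ Finset.range (t + 1), rcc t ((t + k : ℕ) : ℤ)
      = ∑ k ∈ Finset.range (t + 1), rcc t (2 * t - (k : ℤ)) := by
    rw [← Finset.sum_range_reflect (fun k => rcc t (2 * t - (k : ℤ))) (t + 1)]
    refine Finset.sum_congr rfl fun k hk => ?_
    rw [Finset.mem_range] at hk
    congr 1
    have hk' : (t + 1 - 1 - k : ℕ) = t - k := by omega
    rw [hk', Nat.cast_sub (by omega : k ≤ t)]
    push_cast
    ring
  rw [hrefl]
  rcases Nat.even_or_odd t with he | ho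
  · -- t = 2h, h ≥ 1
    obtain ⟨h, hh⟩ := he
    have hh2 : t = 2 * h := by omega
    subst hh2
    have hh : 1 ≤ h := by omega
    rw [Finset.sum_range_succ, lowSum (2 * h) h le_rfl, upSum (2 * h) h hh (by omega)]
    have e : rcc (2 * h) (2 * ((2 * h : ℕ) : ℤ) - ((2 * h : ℕ) : ℤ)) = 5 * h - 1 := by
      rw [show (2 * ((2 * h : ℕ) : ℤ) - ((2 * h : ℕ) : ℤ)) = 2 * ((2 * h : ℕ) : ℤ) - 2 * (h : ℤ)
        by push_cast; ring]
      exact rcc_up_even (2 * h) h (by exact_mod_cast hh) (by push_cast; omega)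
    rw [e]
    push_cast
    ring
  · -- t = 2h + 1
    obtain ⟨h, hh⟩ := ho
    subst hh
    rw [Finset.sum_range_succ, lowSum (2 * h + 1) h (by omega)]
    have e : rcc (2 * h + 1) ((2 * h : ℕ) : ℤ) = 3 * (2 * h + 1 : ℕ) - h := by
      rw [show ((2 * h : ℕ) : ℤ) = 2 * (h : ℤ) by push_cast; ring]
      rw [rcc_low_even (2 * h + 1) h (by positivity) (by push_cast; omega)]
    rw [e]
    rw [show 2 * h + 1 + 1 = 2 * (h + 1) by ring,
      upSum (2 * h + 1) (h + 1) (by omega) (by omega)]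
    push_cast
    ring

lemma card_SS_eq (t : ℕ) (ht : 1 ≤ t) : ((SS t).card : ℤ) = 4 * t ^ 2 - 2 * t + 3 := by
  rw [card_SS, ← sum_rcc t ht]
  refine Finset.sum_congr rfl fun y hy => ?_
  rw [Finset.mem_range] at hy
  exact card_RR t y (by positivity) (by exact_mod_cast by omega) ht

section Main

variable (A : Finset (ℤ × ℤ))

set_option maxHeartbeats 2000000 in
lemma step_lemma (A : Finset (ℤ × ℤ))
    (hA : A = {(0,0), (3,0), (2,0), (2,2), (0,1)}) (t : ℕ) (ht : 1 ≤ t) :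
    SS t + A = SS (t + 1) := by
  ext ⟨x, y⟩
  constructor
  · intro h
    rw [Finset.mem_add] at h
    obtain ⟨⟨a1, a2⟩, ha, ⟨b1, b2⟩, hb, hab⟩ := h
    rw [mem_SS] at ha
    rw [mem_SS]
    simp only [hA, Finset.mem_insert, Finset.mem_singleton, Prod.mk.injEq] at hb
    rw [Prod.ext_iff] at hab
    simp only [Prod.fst_add, Prod.snd_add] at hab
    push_cast at ha ⊢
    rcases hb with ⟨rfl, rfl⟩ | ⟨rfl, rfl⟩ | ⟨rfl, rfl⟩ | ⟨rfl, rfl⟩ | ⟨rfl, rfl⟩ <;> omega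
  · intro h
    rw [mem_SS] at h
    rw [Finset.mem_add]
    have hmem : ∀ a b : ℤ, (a, b) ∈ A ↔
        ((a,b) = ((0:ℤ),(0:ℤ)) ∨ (a,b) = ((3:ℤ),(0:ℤ)) ∨ (a,b) = ((2:ℤ),(0:ℤ)) ∨
         (a,b) = ((2:ℤ),(2:ℤ)) ∨ (a,b) = ((0:ℤ),(1:ℤ))) := by
      intro a b; simp [hA]
    by_cases h1 : (x - 2, y - 2) ∈ SS t
    · exact ⟨(x - 2, y - 2), h1, (2, 2), by simp [hA], by simp⟩
    by_cases h2 : (x, y - 1) ∈ SS t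
    · exact ⟨(x, y - 1), h2, (0, 1), by simp [hA], by simp⟩
    by_cases h3 : (x - 3, y) ∈ SS t
    · exact ⟨(x - 3, y), h3, (3, 0), by simp [hA], by simp⟩
    by_cases h4 : (x - 2, y) ∈ SS t
    · exact ⟨(x - 2, y), h4, (2, 0), by simp [hA], by simp⟩
    by_cases h5 : (x, y) ∈ SS t
    · exact ⟨(x, y), h5, (0, 0), by simp [hA], by simp⟩
    exfalso
    rw [mem_SS] at h1 h2 h3 h4 h5
    push_cast at h h1 h2 h3 h4 h5
    omega

lemma smul_eq_SS (A : Finset (ℤ × ℤ))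
    (hA : A = {(0,0), (3,0), (2,0), (2,2), (0,1)}) :
    ∀ t : ℕ, 1 ≤ t → t • A = SS t := by
  intro t
  induction t with
  | zero => omega
  | succ t ih =>
    intro _
    rcases Nat.eq_zero_or_pos t with rfl | ht
    · rw [one_nsmul]
      ext ⟨x, y⟩
      rw [mem_SS]
      simp only [hA, Finset.mem_insert, Finset.mem_singleton, Prod.mk.injEq]
      push_cast
      constructor
      · rintro (⟨rfl, rfl⟩ | ⟨rfl, rfl⟩ | ⟨rfl, rfl⟩ | ⟨rfl, rfl⟩ | ⟨rfl, rfl⟩) <;> norm_num <;> omega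
      · intro h; omega
    · rw [succ_nsmul, ih ht, step_lemma A hA t ht]

end Main

/-- For `A = {(0,0),(3,0),(2,0),(2,2),(0,1)} ⊂ ℤ²` (so `d_A = 4`), the `t`-fold sumset
satisfies `|tA| = 4t² − 2t + 3` for all `t ≥ 1`. -/
theorem stmt_17 (A : Finset (ℤ × ℤ))
    (hA : A = {(0,0), (3,0), (2,0), (2,2), (0,1)}) :
    ∀ t : ℕ, 1 ≤ t → ((t • A).card : ℤ) = 4 * t ^ 2 - 2 * t + 3 := by
  intro t ht
  rw [smul_eq_SS A hA t ht]
  exact card_SS_eq t ht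
end

section
/- Let A = {(3,0),(2,0),(2,2),(0,1)} ⊂ ℤ². Then |tA| = 3t² − 6t + 11 for all t ≥ 3. -/
/-!
Writing a point of `t • A` as `c • (2,2)` plus a sum of `t - c` elements of
`{(3,0), (2,0), (0,1)}` gives an explicit description of `t • A` by linear inequalities.
From it, a point of `(t+1) • A` is `(2,2)` plus a point of `t • A` unless it lies on one of the
rows `y = 0`, `y = 1` or on one of the four lines `x + 2y = 2(t+1) + j`, `j < 4`, and those
exceptional points of `(t+1) • A` number `(t+2) + (t+1) + ∑_{j<4} (t-j) = 6t - 3` once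
`t ≥ 3`. So `|(t+1) • A| = |t • A| + 6t - 3`, and `|3 • A| = 20` starts the induction.
-/

open Pointwise

def quad : Finset (ℤ × ℤ) := {(3, 0), (2, 0), (2, 2), (0, 1)}

/-- `c` is the number of summands `(2,2)` and `t + c - y` the number of summands `(3,0)` or
`(2,0)`, which together have first coordinate anywhere between `2(t + c - y)` and
`3(t + c - y)`; the box is only a search range. -/
noncomputable def sumsetModel (t : ℕ) : Finset (ℤ × ℤ) :=
  (Finset.Icc ((0 : ℤ), (0 : ℤ)) (3 * t, 2 * t)).filter fun p =>
    ∃ c ∈ Finset.Icc (0 : ℤ) t, 2 * c ≤ p.2 ∧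
      2 * (t + c - p.2) ≤ p.1 - 2 * c ∧ p.1 - 2 * c ≤ 3 * (t + c - p.2)

lemma mem_sumsetModel {t : ℕ} {x y : ℤ} :
    (x, y) ∈ sumsetModel t ↔ ∃ c : ℤ, 0 ≤ c ∧ 2 * c ≤ y ∧
      2 * (t + c - y) ≤ x - 2 * c ∧ x - 2 * c ≤ 3 * (t + c - y) := by
  simp only [sumsetModel, Finset.mem_filter, Finset.mem_Icc, Prod.mk_le_mk]
  constructor
  · rintro ⟨-, c, ⟨hc, -⟩, h⟩
    exact ⟨c, hc, h⟩
  · rintro ⟨c, hc, h₁, h₂, h₃⟩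
    exact ⟨⟨⟨by omega, by omega⟩, by omega, by omega⟩,
      c, ⟨hc, by omega⟩, h₁, h₂, h₃⟩

lemma sumsetModel_add_quad (t : ℕ) : sumsetModel t + quad = sumsetModel (t + 1) := by
  ext p
  simp only [Finset.mem_add, quad, Finset.mem_insert, Finset.mem_singleton]
  constructor
  · rintro ⟨⟨a, b⟩, hab, v, hv, rfl⟩
    obtain ⟨c, hc⟩ := mem_sumsetModel.1 hab
    rcases hv with rfl | rfl | rfl | rfl <;> simp only [Prod.mk_add_mk, mem_sumsetModel]
    · exact ⟨c, by push_cast; omega⟩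
    · exact ⟨c, by push_cast; omega⟩
    · exact ⟨c + 1, by push_cast; omega⟩
    · exact ⟨c, by push_cast; omega⟩
  · obtain ⟨x, y⟩ := p
    intro h
    obtain ⟨c, hc₀, hc₁, hc₂, hc₃⟩ := mem_sumsetModel.1 h
    push_cast at hc₂ hc₃
    by_cases hy : 2 * c + 1 ≤ y
    · exact ⟨(x, y - 1), mem_sumsetModel.2 ⟨c, by omega⟩, (0, 1), by simp, by simp⟩
    by_cases hc : 1 ≤ c
    · exact ⟨(x - 2, y - 2), mem_sumsetModel.2 ⟨c - 1, by omega⟩, (2, 2), by simp, by simp⟩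
    by_cases hx : 2 * t + 3 ≤ x
    · exact ⟨(x - 3, y), mem_sumsetModel.2 ⟨0, by omega⟩, (3, 0), by simp, by simp⟩
    · exact ⟨(x - 2, y), mem_sumsetModel.2 ⟨0, by omega⟩, (2, 0), by simp, by simp⟩

lemma nsmul_quad (t : ℕ) : t • quad = sumsetModel t := by
  induction t with
  | zero => decide
  | succ t ih => rw [succ_nsmul, ih, sumsetModel_add_quad]

noncomputable def diagonal (T j : ℕ) : Finset (ℤ × ℤ) :=
  (Finset.Icc (2 : ℤ) (T - j)).image fun y => (2 * T + j - 2 * y, y)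

lemma mem_diagonal {T j : ℕ} {x y : ℤ} :
    (x, y) ∈ diagonal T j ↔ 2 ≤ y ∧ y ≤ T - j ∧ x + 2 * y = 2 * T + j := by
  simp only [diagonal, Finset.mem_image, Finset.mem_Icc, Prod.mk.injEq]
  constructor
  · rintro ⟨y, hy, rfl, rfl⟩
    omega
  · rintro ⟨h₁, h₂, h₃⟩
    exact ⟨y, ⟨h₁, h₂⟩, by omega, rfl⟩

lemma card_diagonal (T j : ℕ) : (diagonal T j).card = T - j - 1 := by
  rw [diagonal, Finset.card_image_of_injective _ fun _ _ h => congrArg Prod.snd h, Int.card_Icc]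
  omega

noncomputable def layer (T : ℕ) : Finset (ℤ × ℤ) :=
  Finset.Icc (2 * T : ℤ) (3 * T) ×ˢ {(0 : ℤ)} ∪
    Finset.Icc (2 * T - 2 : ℤ) (3 * T - 3) ×ˢ {(1 : ℤ)} ∪
    (Finset.range 4).biUnion (diagonal T)

lemma mem_layer {T : ℕ} {x y : ℤ} :
    (x, y) ∈ layer T ↔ (y = 0 ∧ 2 * T ≤ x ∧ x ≤ 3 * T) ∨
      (y = 1 ∧ 2 * T - 2 ≤ x ∧ x ≤ 3 * T - 3) ∨
      (2 ≤ y ∧ 2 * T ≤ x + 2 * y ∧ x + 2 * y ≤ 2 * T + 3 ∧ x + 3 * y ≤ 3 * T) := by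
  simp only [layer, Finset.mem_union, Finset.mem_product, Finset.mem_Icc, Finset.mem_singleton,
    Finset.mem_biUnion, Finset.mem_range, mem_diagonal]
  constructor
  · rintro ((h | h) | ⟨j, hj, h⟩) <;> omega
  · rintro (h | h | h)
    · omega
    · omega
    · exact Or.inr ⟨(x + 2 * y - 2 * T).toNat, by omega, by omega⟩

lemma mk_mem_vadd_finset_iff {G H : Type*} [AddCommGroup G] [AddCommGroup H] [DecidableEq G]
    [DecidableEq H] {s : Finset (G × H)} {a x : G} {b y : H} :
    (x, y) ∈ (a, b) +ᵥ s ↔ (x - a, y - b) ∈ s := by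
  rw [← Finset.neg_vadd_mem_iff, vadd_eq_add, Prod.neg_mk, Prod.mk_add_mk, neg_add_eq_sub,
    neg_add_eq_sub]

lemma sumsetModel_succ (t : ℕ) :
    sumsetModel (t + 1) = (((2, 2) : ℤ × ℤ) +ᵥ sumsetModel t) ∪ layer (t + 1) := by
  ext p
  obtain ⟨x, y⟩ := p
  simp only [Finset.mem_union, mk_mem_vadd_finset_iff, mem_sumsetModel, mem_layer]
  push_cast
  constructor
  · rintro ⟨c, hc⟩
    by_cases hc₀ : 1 ≤ c
    · exact Or.inl ⟨c - 1, by omega⟩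
    by_cases hxy : 2 ≤ y ∧ 2 * t + 6 ≤ x + 2 * y
    · exact Or.inl ⟨0, by omega⟩
    · exact Or.inr (by omega)
  · rintro (⟨c, hc⟩ | h)
    · exact ⟨c + 1, by omega⟩
    · exact ⟨0, by omega⟩

lemma disjoint_vadd_sumsetModel_layer (t : ℕ) :
    Disjoint (((2, 2) : ℤ × ℤ) +ᵥ sumsetModel t) (layer (t + 1)) := by
  rw [Finset.disjoint_left]
  rintro ⟨x, y⟩ h
  obtain ⟨c, hc⟩ := mem_sumsetModel.1 (mk_mem_vadd_finset_iff.1 h)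
  rw [mem_layer]
  push_cast
  omega

lemma card_layer {T : ℕ} (hT : 4 ≤ T) : (layer T).card = 6 * T - 9 := by
  rw [layer, Finset.card_union_of_disjoint, Finset.card_union_of_disjoint, Finset.card_biUnion]
  · simp only [Finset.card_product, Finset.card_singleton, Int.card_Icc, Finset.sum_range_succ,
      Finset.sum_range_zero, card_diagonal]
    omega
  · intro i _ j _ hij
    rw [Function.onFun, Finset.disjoint_left]
    rintro ⟨x, y⟩ hi hj
    have := (mem_diagonal.1 hi).2.2
    have := (mem_diagonal.1 hj).2.2
    omega
  · exact Finset.disjoint_product.2 (Or.inr (by simp))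
  · rw [Finset.disjoint_left]
    rintro ⟨x, y⟩ hrow hdiag
    obtain ⟨j, -, hj⟩ := Finset.mem_biUnion.1 hdiag
    simp only [Finset.mem_union, Finset.mem_product, Finset.mem_singleton] at hrow
    have := (mem_diagonal.1 hj).1
    omega

lemma card_sumsetModel_succ (t : ℕ) :
    (sumsetModel (t + 1)).card = (sumsetModel t).card + (layer (t + 1)).card := by
  rw [sumsetModel_succ, Finset.card_union_of_disjoint (disjoint_vadd_sumsetModel_layer t),
    Finset.card_vadd_finset]

lemma card_sumsetModel {t : ℕ} (ht : 3 ≤ t) :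
    ((sumsetModel t).card : ℤ) = 3 * t ^ 2 - 6 * t + 11 := by
  induction t, ht using Nat.le_induction with
  | base => decide
  | succ t ht ih =>
    rw [card_sumsetModel_succ, card_layer (by omega)]
    push_cast [show 9 ≤ 6 * (t + 1) by omega]
    rw [ih]
    ring

/-- For `A = {(3,0),(2,0),(2,2),(0,1)} ⊂ ℤ²`, `|tA| = 3t² − 6t + 11` for all `t ≥ 3`. -/
theorem stmt_18 (A : Finset (ℤ × ℤ))
    (hA : A = {(3,0), (2,0), (2,2), (0,1)}) :
    ∀ t : ℕ, 3 ≤ t → ((t • A).card : ℤ) = 3 * t ^ 2 - 6 * t + 11 := by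
  intro t ht
  rw [hA, ← quad, nsmul_quad, card_sumsetModel ht]
end
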